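/- For all real x, y ≥ 0 with x + y ≤ π: 2Λ(x) + Λ(y) − 2Λ(x + y) ≤ 4Λ(π/4). [The Lobachevsky-function optimization underlying the per-crossing bound v_oct of Garoufalidis–Lê used in Proposition 6.1; the maximum value 4Λ(π/4) is attained at (x, y) = (π/4, π/2).] -/

import Mathlib

open Real Filter

/-- The Lobachevsky function `Λ(x) = -∫₀ˣ log|2 sin t| dt`. -/
noncomputable def lob (x : ℝ) : ℝ := -∫ t in (0:ℝ)..x, Real.log |2 * Real.sin t|

/-!
Since `Λ(a) - Λ(b) = ∫_a^b log |2 sin t| dt`, the left side is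
`2 ∫_x^{x+y} log |2 sin| - ∫_0^y log |2 sin|`. On `(0, π)` the integrand is symmetric about
`π/2` and increases towards it, so among windows `[x, x + y] ⊆ [0, π]` the centred one,
`x = s := (π - y)/2`, has the largest integral. With `Λ(π - s) = -Λ(s)` this bounds the left
side by `g(y) := 4Λ(s) + Λ(y)`. The duplication formula `2 sin 2t = (2 sin t)(2 cos t)` gives
`g(y) - g(π/2) = -∫_{π/2}^y log tan(u/2) du ≤ 0`, and `g(π/2) = 4Λ(π/4)`.
-/

open MeasureTheory intervalIntegral Set

noncomputable def logAbsTwoSin (t : ℝ) : ℝ := log |2 * sin t|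

lemma lob_eq_neg_integral (x : ℝ) : lob x = -∫ t in (0:ℝ)..x, logAbsTwoSin t := rfl

lemma logAbsTwoSin_pi_sub (t : ℝ) : logAbsTwoSin (π - t) = logAbsTwoSin t := by
  simp only [logAbsTwoSin, sin_pi_sub]

lemma intervalIntegrable_logAbsTwoSin (a b : ℝ) :
    IntervalIntegrable logAbsTwoSin volume a b :=
  (analyticOnNhd_const.mul analyticOnNhd_sin).meromorphicOn.intervalIntegrable_log_norm

lemma integral_logAbsTwoSin_zero_pi : ∫ t in (0:ℝ)..π, logAbsTwoSin t = 0 := by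
  have hsplit : ∀ t ∈ Ioo 0 π, logAbsTwoSin t = log 2 + log (sin t) := fun t ht => by
    have hsin := sin_pos_of_pos_of_lt_pi ht.1 ht.2
    rw [logAbsTwoSin, abs_of_pos (by positivity), log_mul two_ne_zero hsin.ne']
  have hlog_sin : IntervalIntegrable (fun t => log (sin t)) volume 0 π :=
    intervalIntegrable_log_sin
  rw [integral_congr_Ioo_of_le pi_pos.le hsplit, integral_add intervalIntegrable_const hlog_sin,
    integral_log_sin_zero_pi]
  simp only [intervalIntegral.integral_const, sub_zero, smul_eq_mul]
  ring

lemma logAbsTwoSin_two_mul {t : ℝ} (h : sin (2 * t) ≠ 0) :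
    logAbsTwoSin (2 * t) = logAbsTwoSin t + logAbsTwoSin (π / 2 - t) := by
  rw [sin_two_mul] at h
  have hs : sin t ≠ 0 := fun h0 => h (by rw [h0]; ring)
  have hc : cos t ≠ 0 := fun h0 => h (by rw [h0]; ring)
  rw [logAbsTwoSin, logAbsTwoSin, logAbsTwoSin, sin_pi_div_two_sub,
    ← log_mul (by positivity) (by positivity), ← abs_mul, sin_two_mul]
  ring_nf

lemma sin_le_sin_of_abs_sub_pi_div_two_le {a b : ℝ} (hb : |b - π / 2| ≤ π)
    (h : |a - π / 2| ≤ |b - π / 2|) : sin b ≤ sin a := by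
  rw [← cos_sub_pi_div_two, ← cos_sub_pi_div_two, ← cos_abs (a - π / 2),
    ← cos_abs (b - π / 2)]
  exact cos_le_cos_of_nonneg_of_le_pi (abs_nonneg _) hb h

lemma logAbsTwoSin_le_of_abs_sub_pi_div_two_le {a b : ℝ} (hb : b ∈ Ioo 0 π)
    (h : |a - π / 2| ≤ |b - π / 2|) : logAbsTwoSin b ≤ logAbsTwoSin a := by
  have hsin_pos := sin_pos_of_pos_of_lt_pi hb.1 hb.2
  have hsin_le := sin_le_sin_of_abs_sub_pi_div_two_le
    (abs_le.2 ⟨by linarith [hb.1, pi_pos], by linarith [hb.2, pi_pos]⟩) h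
  rw [logAbsTwoSin, logAbsTwoSin, abs_of_pos (by positivity : 0 < 2 * sin b)]
  exact log_le_log (by positivity)
    ((mul_le_mul_of_nonneg_left hsin_le two_pos.le).trans (le_abs_self _))

lemma integral_nonpos_of_nonpos_on_Ioo_of_nonneg_on_Ioo {h : ℝ → ℝ} {a b : ℝ}
    (hint : IntervalIntegrable h volume a b) (hab : ∀ u ∈ Ioo a b, h u ≤ 0)
    (hba : ∀ u ∈ Ioo b a, 0 ≤ h u) : ∫ u in a..b, h u ≤ 0 := by
  rcases le_total a b with hle | hle
  · simpa using integral_mono_on_of_le_Ioo hle hint intervalIntegrable_const hab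
  · rw [integral_symm, neg_nonpos]
    simpa using integral_mono_on_of_le_Ioo hle intervalIntegrable_const hint.symm hba

lemma integral_window_sub_integral_window {f : ℝ → ℝ}
    (hf : ∀ a b, IntervalIntegrable f volume a b) (a b y : ℝ) :
    (∫ t in a..a + y, f t) - ∫ t in b..b + y, f t = ∫ t in a..b, (f t - f (t + y)) := by
  have hshift : IntervalIntegrable (fun t => f (t + y)) volume a b := by
    simpa using (hf (a + y) (b + y)).comp_add_right y
  rw [integral_interval_sub_interval_comm (hf _ _) (hf _ _) (hf _ _),
    intervalIntegral.integral_sub (hf a b) hshift, integral_comp_add_right]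

lemma lob_sub_lob (a b : ℝ) : lob a - lob b = ∫ t in a..b, logAbsTwoSin t := by
  rw [lob_eq_neg_integral, lob_eq_neg_integral, neg_sub_neg,
    integral_interval_sub_left (intervalIntegrable_logAbsTwoSin _ _)
      (intervalIntegrable_logAbsTwoSin _ _)]

lemma lob_pi_sub (a : ℝ) : lob (π - a) = -lob a := by
  have hrefl : ∫ t in (π - a)..π, logAbsTwoSin t = ∫ t in (0:ℝ)..a, logAbsTwoSin t := by
    simpa [logAbsTwoSin_pi_sub] using
      (integral_comp_sub_left (a := 0) (b := a) logAbsTwoSin π).symm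
  have hsplit := integral_interval_sub_left (intervalIntegrable_logAbsTwoSin 0 π)
    (intervalIntegrable_logAbsTwoSin 0 (π - a))
  rw [hrefl, integral_logAbsTwoSin_zero_pi] at hsplit
  rw [lob_eq_neg_integral, lob_eq_neg_integral]
  linarith

lemma lob_pi_div_two : lob (π / 2) = 0 := by
  have h := lob_pi_sub (π / 2)
  rw [show π - π / 2 = π / 2 by ring] at h
  linarith

lemma lob_sub_lob_add_le {x y : ℝ} (hx : 0 ≤ x) (hy : 0 ≤ y) (hxy : x + y ≤ π) :
    lob x - lob (x + y) ≤ lob ((π - y) / 2) - lob ((π - y) / 2 + y) := by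
  rw [← sub_nonpos, lob_sub_lob, lob_sub_lob,
    integral_window_sub_integral_window intervalIntegrable_logAbsTwoSin]
  refine integral_nonpos_of_nonpos_on_Ioo_of_nonneg_on_Ioo
    ((intervalIntegrable_logAbsTwoSin _ _).sub ?_) (fun t ht => ?_) (fun t ht => ?_)
  · simpa using (intervalIntegrable_logAbsTwoSin (x + y) ((π - y) / 2 + y)).comp_add_right y
  · have := logAbsTwoSin_le_of_abs_sub_pi_div_two_le (a := t + y) (b := t)
      ⟨by linarith [ht.1], by linarith [ht.2]⟩
      (by rw [abs_sub_comm t]; exact abs_le_abs (by linarith [ht.2]) (by linarith))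
    linarith
  · have := logAbsTwoSin_le_of_abs_sub_pi_div_two_le (a := t) (b := t + y)
      ⟨by linarith [ht.1], by linarith [ht.2]⟩ (abs_le_abs (by linarith) (by linarith [ht.1]))
    linarith

lemma intervalIntegrable_logAbsTwoSin_pi_div_two_sub_div_two (a b : ℝ) :
    IntervalIntegrable (fun u => logAbsTwoSin (π / 2 - u / 2)) volume a b := by
  convert ((intervalIntegrable_logAbsTwoSin (π / 2 - a / 2) (π / 2 - b / 2)).comp_sub_left
    (π / 2)).comp_mul_left (c := 2⁻¹) using 1
  · ext u; ring_nf
  all_goals ring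

lemma integral_two_mul_logAbsTwoSin_sub (y : ℝ) :
    ∫ u in (π / 2)..y, (2 * logAbsTwoSin (π / 2 - u / 2) - logAbsTwoSin u)
      = 4 * (lob ((π - y) / 2) - lob (π / 4)) + lob y := by
  have hsubst : ∫ u in (π / 2)..y, logAbsTwoSin (π / 2 - u / 2)
      = 2 * (lob ((π - y) / 2) - lob (π / 4)) := by
    rw [integral_comp_sub_div logAbsTwoSin two_ne_zero, lob_sub_lob, smul_eq_mul]
    congr 3 <;> ring
  rw [intervalIntegral.integral_sub
      ((intervalIntegrable_logAbsTwoSin_pi_div_two_sub_div_two _ _).const_mul 2)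
      (intervalIntegrable_logAbsTwoSin _ _),
    intervalIntegral.integral_const_mul, hsubst, ← lob_sub_lob, lob_pi_div_two]
  ring

lemma four_mul_lob_add_lob_le {y : ℝ} (hy : 0 ≤ y) (hyπ : y ≤ π) :
    4 * lob ((π - y) / 2) + lob y ≤ 4 * lob (π / 4) := by
  have hdup : ∀ u ∈ Ioo 0 π, 2 * logAbsTwoSin (π / 2 - u / 2) - logAbsTwoSin u
      = logAbsTwoSin (π / 2 - u / 2) - logAbsTwoSin (u / 2) := fun u hu => by
    have := logAbsTwoSin_two_mul (t := u / 2)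
      (by rw [mul_div_cancel₀ u two_ne_zero]; exact (sin_pos_of_pos_of_lt_pi hu.1 hu.2).ne')
    rw [mul_div_cancel₀ u two_ne_zero] at this
    linarith
  have hneg_half : ∀ u, π / 2 - u / 2 - π / 2 = -(u / 2) := fun u => by ring
  have hsign := integral_nonpos_of_nonpos_on_Ioo_of_nonneg_on_Ioo
    (((intervalIntegrable_logAbsTwoSin_pi_div_two_sub_div_two (π / 2) y).const_mul 2).sub
      (intervalIntegrable_logAbsTwoSin _ _)) (fun u hu => ?_) (fun u hu => ?_)
  · linarith [integral_two_mul_logAbsTwoSin_sub y]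
  · rw [hdup u ⟨by linarith [hu.1, pi_pos], by linarith [hu.2]⟩, sub_nonpos]
    refine logAbsTwoSin_le_of_abs_sub_pi_div_two_le
      ⟨by linarith [hu.2], by linarith [hu.1]⟩ ?_
    rw [abs_sub_comm (u / 2), hneg_half, abs_neg]
    exact abs_le_abs (by linarith [hu.1]) (by linarith)
  · rw [hdup u ⟨by linarith [hu.1], by linarith [hu.2, pi_pos]⟩, sub_nonneg]
    refine logAbsTwoSin_le_of_abs_sub_pi_div_two_le
      ⟨by linarith [hu.1], by linarith [hu.2, pi_pos]⟩ ?_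
    rw [abs_sub_comm (u / 2), hneg_half, abs_neg]
    exact abs_le_abs (by linarith [hu.2]) (by linarith [hu.1])

theorem lob_optimization (x y : ℝ) (hx : 0 ≤ x) (hy : 0 ≤ y) (hxy : x + y ≤ Real.pi) :
    2 * lob x + lob y - 2 * lob (x + y) ≤ 4 * lob (Real.pi / 4) := by
  have hwindow := lob_sub_lob_add_le hx hy hxy
  have hcentred : lob ((π - y) / 2 + y) = -lob ((π - y) / 2) := by
    rw [← lob_pi_sub]; ring_nf
  have hcentre_max := four_mul_lob_add_lob_le hy (by linarith)
  linarith
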